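/- arXiv:1602.01596 — 3 statements merged into one kernel-verified Lean document; each statement's English description precedes it below -/
import Mathlib

section
/- Every nonabelian semidirect product (ℤ/2 × ℤ/2) ⋊ ℤ/3 is isomorphic to the alternating group A₄. -/
/-!
Since `V₄ = (ℤ/2)²` and `ℤ/3` are abelian, a nonabelian semidirect product comes from a nontrivial
action, which sends `ofAdd 1` to one of the two automorphisms of order 3 of `V₄`: `kleinRotation`
or its inverse. Precomposing the action with inversion on `ℤ/3` reduces the second case to the
first. There, the double transpositions and a 3-cycle of `A₄` satisfy the defining relation of the
semidirect product, and the resulting homomorphism `V₄ ⋊ ℤ/3 → A₄` is injective because no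
nontrivial power of a 3-cycle is a product of double transpositions. Both groups have order 12.
-/

open Multiplicative SemidirectProduct

local notation "V₄" => Multiplicative (ZMod 2 × ZMod 2)
local notation "C₃" => Multiplicative (ZMod 3)
local notation "A₄" => alternatingGroup (Fin 4)

theorem Multiplicative.ofAdd_one_pow_val {n : ℕ} [NeZero n] (g : Multiplicative (ZMod n)) :
    ofAdd (1 : ZMod n) ^ (toAdd g).val = g := by
  rw [← ofAdd_nsmul, nsmul_one, ZMod.natCast_zmod_val, ofAdd_toAdd]

theorem MonoidHom.map_zmod_eq_pow_val {n : ℕ} [NeZero n] {M : Type*} [Monoid M]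
    (f : Multiplicative (ZMod n) →* M) (g : Multiplicative (ZMod n)) :
    f g = f (ofAdd 1) ^ (toAdd g).val := by
  rw [← map_pow, ofAdd_one_pow_val]

namespace SemidirectProduct

theorem mul_comm_of_eq_one {N G : Type*} [CommGroup N] [CommGroup G] {φ : G →* MulAut N}
    (hφ : φ = 1) (x y : N ⋊[φ] G) : x * y = y * x := by
  subst hφ
  exact mulEquivProd.injective (by simp only [map_mul, mul_comm])

theorem lift_injective {N G H : Type*} [Group N] [Group G] [Group H] {φ : G →* MulAut N}
    {fn : N →* H} {fg : G →* H}
    {h : ∀ g, fn.comp (φ g).toMonoidHom = (MulAut.conj (fg g)).toMonoidHom.comp fn}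
    (hn : Function.Injective fn) (hdisj : ∀ n g, fn n = fg g → g = 1) :
    Function.Injective (lift fn fg h) := by
  rw [injective_iff_map_eq_one]
  intro x hx
  have hright : x.right = 1 :=
    hdisj x.left⁻¹ x.right (by rw [map_inv]; exact (eq_inv_of_mul_eq_one_right hx).symm)
  have hleft : x.left = 1 := by
    rw [← inl_left_mul_inr_right x, hright, map_mul, lift_inl, lift_inr, map_one, mul_one] at hx
    exact (map_eq_one_iff fn hn).1 hx
  ext <;> simp [hleft, hright]

end SemidirectProduct

def kleinRotation : MulAut V₄ where
  toFun p := ofAdd ((toAdd p).2, (toAdd p).1 + (toAdd p).2)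
  invFun p := ofAdd ((toAdd p).1 + (toAdd p).2, (toAdd p).1)
  left_inv := by decide
  right_inv := by decide
  map_mul' := by decide

set_option synthInstance.maxSize 1000 in
theorem eq_kleinRotation_or_eq_inv_of_pow_three_eq_one {a : MulAut V₄} (h3 : a ^ 3 = 1)
    (h1 : a ≠ 1) : a = kleinRotation ∨ a = kleinRotation⁻¹ := by
  revert a
  decide

def kleinToAlternating : V₄ →* A₄ where
  toFun p :=
    (⟨Equiv.swap 0 1 * Equiv.swap 2 3, Equiv.Perm.mem_alternatingGroup.2 (by decide)⟩ : A₄) ^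
        (toAdd p).1.val *
      (⟨Equiv.swap 0 2 * Equiv.swap 1 3, Equiv.Perm.mem_alternatingGroup.2 (by decide)⟩ : A₄) ^
        (toAdd p).2.val
  map_one' := by decide
  map_mul' := by decide

def zmod3ToAlternating : C₃ →* A₄ where
  toFun g :=
    (⟨Equiv.swap 1 2 * Equiv.swap 0 1, Equiv.Perm.mem_alternatingGroup.2 (by decide)⟩ : A₄) ^
      (toAdd g).val
  map_one' := by decide
  map_mul' := by decide

theorem kleinToAlternating_kleinRotation_pow (g : C₃) (n : V₄) :
    kleinToAlternating ((kleinRotation ^ (toAdd g).val) n) =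
      zmod3ToAlternating g * kleinToAlternating n * (zmod3ToAlternating g)⁻¹ := by
  revert g n
  decide

section KleinSemidirect

variable (φ : C₃ →* MulAut V₄) (hφ : φ (ofAdd 1) = kleinRotation)

def kleinSemidirectToAlternating : V₄ ⋊[φ] C₃ →* A₄ :=
  lift kleinToAlternating zmod3ToAlternating fun g ↦ MonoidHom.ext fun n ↦ by
    simpa [φ.map_zmod_eq_pow_val g, hφ] using kleinToAlternating_kleinRotation_pow g n

theorem kleinSemidirectToAlternating_bijective :
    Function.Bijective (kleinSemidirectToAlternating φ hφ) := by
  refine (Nat.bijective_iff_injective_and_card _).2 ⟨lift_injective (by decide) (by decide), ?_⟩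
  rw [card, Nat.card_eq_fintype_card, Nat.card_eq_fintype_card, Nat.card_eq_fintype_card]
  decide

noncomputable def kleinSemidirectEquivAlternating : V₄ ⋊[φ] C₃ ≃* A₄ :=
  MulEquiv.ofBijective _ (kleinSemidirectToAlternating_bijective φ hφ)

end KleinSemidirect

/-- Every nonabelian semidirect product `(ℤ/2 × ℤ/2) ⋊ ℤ/3` is isomorphic to the
alternating group `A₄`. -/
theorem nonabelian_klein_semidirect_z3_iso_A4
    (φ : Multiplicative (ZMod 3) →* MulAut (Multiplicative (ZMod 2 × ZMod 2)))
    (hnonab : ¬ ∀ x y : (Multiplicative (ZMod 2 × ZMod 2)) ⋊[φ] Multiplicative (ZMod 3),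
      x * y = y * x) :
    Nonempty (((Multiplicative (ZMod 2 × ZMod 2)) ⋊[φ] Multiplicative (ZMod 3)) ≃*
      alternatingGroup (Fin 4)) := by
  have h3 : φ (ofAdd 1) ^ 3 = 1 := by
    rw [← map_pow, show (ofAdd 1 : C₃) ^ 3 = 1 by decide, map_one]
  have h1 : φ (ofAdd 1) ≠ 1 := fun h ↦ hnonab <| mul_comm_of_eq_one <| MonoidHom.ext fun g ↦ by
    rw [φ.map_zmod_eq_pow_val, h, one_pow, MonoidHom.one_apply]
  rcases eq_kleinRotation_or_eq_inv_of_pow_three_eq_one h3 h1 with h | h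
  · exact ⟨kleinSemidirectEquivAlternating φ h⟩
  · exact ⟨(congr' (MulEquiv.refl V₄) (MulEquiv.inv C₃)).trans
      (kleinSemidirectEquivAlternating _ (by ext <;> simp [h]))⟩
end

section
/- Let σ be the k-automorphism of k((t)) sending t to ζt for a fixed primitive cube root of unity ζ ∈ k, char k = 2. If a ∈ t⁻¹k[t⁻¹] has only odd-degree terms in t⁻¹ and no terms of degree divisible by 3, then a + σ(a) + σ²(a) = 0 and the 𝔽₂-vector space spanned by the images of a, σ(a), σ²(a) in k((t))/(F−1)k((t)) has dimension exactly 2, provided a ≠ 0. -/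
/-!
With `u = t⁻¹` and `ω = ζ⁻¹`, the conjugates of `a = p(u)` are `p(ωʲ u)`, and their sum vanishes
because `∑ⱼ ω^{jn} = 0` whenever `3 ∤ n`. In characteristic two this makes `σ²a = a + σa`, so it
suffices that none of `a`, `σa`, `σ²a` is of the form `f² - f`. Each of them is a nonzero
polynomial in `t⁻¹` with only odd degrees, so its order is odd and negative; but if `f` has
negative order then `f² - f` has the even order `2 ord f`, and otherwise it has no polar part.
Hence the images of `a` and `σa` are `𝔽₂`-linearly independent and span a group of order `2²`.
-/

open HahnSeries Polynomial

theorem IsPrimitiveRoot.sum_aeval_pow_smul_eq_zero {K A : Type*} [Field K] [Semiring A]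
    [Algebra K A] {ζ : K} {n : ℕ} (hζ : IsPrimitiveRoot ζ n) {p : K[X]}
    (hp : ∀ i, p.coeff i ≠ 0 → ¬ n ∣ i) (x : A) :
    ∑ j ∈ Finset.range n, aeval (ζ ^ j • x) p = 0 := by
  simp_rw [aeval_eq_sum_range, _root_.smul_pow]
  rw [Finset.sum_comm]
  refine Finset.sum_eq_zero fun i _ => ?_
  by_cases hi : p.coeff i = 0
  · simp [hi]
  have hgeom : ∑ j ∈ Finset.range n, (ζ ^ i) ^ j = 0 := by
    rw [geom_sum_eq (fun h => hp i hi ((hζ.pow_eq_one_iff_dvd i).mp h)), ← pow_mul, mul_comm,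
      pow_mul, hζ.pow_eq_one, one_pow, sub_self, zero_div]
  have hcomm : ∀ j, (ζ ^ j) ^ i = (ζ ^ i) ^ j := fun j => by
    rw [← pow_mul, ← pow_mul, mul_comm]
  simp_rw [hcomm, ← Finset.smul_sum, ← Finset.sum_smul, hgeom, zero_smul, smul_zero]

theorem mem_closure_setOf_pow_sub_self {R : Type*} [CommRing R] (p : ℕ) [ExpChar R p] {x : R} :
    x ∈ AddSubgroup.closure {y | ∃ f, y = f ^ p - f} ↔ ∃ f, x = f ^ p - f := by
  have hrange : {y : R | ∃ f, y = f ^ p - f} =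
      ((frobenius R p).toAddMonoidHom - AddMonoidHom.id R).range := by
    ext y
    simp [eq_comm, frobenius_def]
  rw [hrange, AddSubgroup.closure_eq, ← SetLike.mem_coe, ← hrange]
  rfl

section ZModModule

variable {G : Type*} [AddCommGroup G]

theorem AddSubgroup.closure_eq_toAddSubgroup_span {n : ℕ} [Module (ZMod n) G] (s : Set G) :
    AddSubgroup.closure s = (Submodule.span (ZMod n) s).toAddSubgroup := by
  refine le_antisymm ((AddSubgroup.closure_le _).2 Submodule.subset_span) ?_
  have hspan : Submodule.span (ZMod n) s ≤
      AddSubgroup.toZModSubmodule n (AddSubgroup.closure s) :=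
    Submodule.span_le.2 AddSubgroup.subset_closure
  exact (Submodule.toAddSubgroup_le _ _).2 hspan

theorem Submodule.natCard_span_pair {K V : Type*} [Field K] [AddCommGroup V] [Module K V] {x y : V}
    (h : LinearIndependent K ![x, y]) : Nat.card (Submodule.span K {x, y}) = Nat.card K ^ 2 := by
  rw [← Matrix.range_cons_cons_empty x y ![]]
  have := FiniteDimensional.span_of_finite K (Set.finite_range ![x, y])
  rw [Module.natCard_eq_pow_finrank (K := K), finrank_span_eq_card h, Fintype.card_fin]

theorem ZModModule.linearIndependent_pair [Module (ZMod 2) G] {x y : G} (hx : x ≠ 0)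
    (hy : y ≠ 0) (hxy : x + y ≠ 0) : LinearIndependent (ZMod 2) ![x, y] := by
  rw [LinearIndependent.pair_iff]
  intro s t h
  have h01 : ∀ r : ZMod 2, r = 0 ∨ r = 1 := by decide
  rcases h01 s with rfl | rfl <;> rcases h01 t with rfl | rfl <;> simp_all

theorem ZModModule.natCard_closure_pair_add [Module (ZMod 2) G] {x y : G} (hx : x ≠ 0)
    (hy : y ≠ 0) (hxy : x + y ≠ 0) : Nat.card (AddSubgroup.closure {x, y, x + y}) = 4 := by
  have hclosure : AddSubgroup.closure {x, y, x + y} = AddSubgroup.closure {x, y} := by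
    refine le_antisymm ((AddSubgroup.closure_le _).2 ?_) (AddSubgroup.closure_mono
      (Set.insert_subset_insert (Set.singleton_subset_iff.2 (Set.mem_insert _ _))))
    have hx' : x ∈ AddSubgroup.closure {x, y} := AddSubgroup.subset_closure (by simp)
    have hy' : y ∈ AddSubgroup.closure {x, y} := AddSubgroup.subset_closure (by simp)
    simp [Set.insert_subset_iff, hx', hy', add_mem hx' hy']
  rw [hclosure, AddSubgroup.closure_eq_toAddSubgroup_span (n := 2)]
  exact (Submodule.natCard_span_pair (linearIndependent_pair hx hy hxy)).trans (by simp)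

end ZModModule

namespace LaurentSeries

variable {R : Type*} [CommRing R]

theorem algebraMap_eq_single (c : R) : algebraMap R (LaurentSeries R) c = single 0 c := by
  simp [algebraMap_apply']

theorem aeval_single_neg_one (c : R) (p : R[X]) :
    aeval (single (-1 : ℤ) c) p = p.sum fun n a => single (-(n : ℤ)) (a * c ^ n) := by
  rw [aeval_def, eval₂_eq_sum]
  refine Finset.sum_congr rfl fun n _ => ?_
  simp [single_pow, algebraMap_eq_single, single_mul_single]

theorem coeff_aeval_single_neg_one (c : R) (p : R[X]) (n : ℕ) :
    (aeval (single (-1 : ℤ) c) p).coeff (-n) = p.coeff n * c ^ n := by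
  rw [aeval_single_neg_one, Polynomial.sum_def, HahnSeries.coeff_sum]
  simp_rw [coeff_single, neg_inj, Nat.cast_inj]
  rw [Finset.sum_ite_eq]
  split_ifs with h
  · rfl
  · rw [notMem_support_iff.mp h, zero_mul]

theorem coeff_aeval_single_neg_one_of_pos (c : R) (p : R[X]) {m : ℤ} (hm : 0 < m) :
    (aeval (single (-1 : ℤ) c) p).coeff m = 0 := by
  rw [aeval_single_neg_one, Polynomial.sum_def, HahnSeries.coeff_sum]
  exact Finset.sum_eq_zero fun n _ => coeff_single_of_ne (by omega)

theorem even_order_sq_sub_self [NoZeroDivisors R] {f : LaurentSeries R}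
    (h : (f ^ 2 - f).order < 0) : Even (f ^ 2 - f).order := by
  have hf : f ≠ 0 := by rintro rfl; simp at h
  have hne : f ^ 2 - f ≠ 0 := by rintro h0; simp [h0] at h
  have hsq : (f ^ 2).order = f.order + f.order := by rw [sq, order_mul hf hf]
  rcases lt_or_ge f.order 0 with hneg | hnonneg
  · have hlt : (f ^ 2).orderTop < f.orderTop := by
      rw [← order_eq_orderTop_of_ne_zero hf, ← order_eq_orderTop_of_ne_zero (pow_ne_zero 2 hf),
        hsq, WithTop.coe_lt_coe]
      omega
    have hsub := orderTop_sub hlt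
    rw [← order_eq_orderTop_of_ne_zero hne, ← order_eq_orderTop_of_ne_zero (pow_ne_zero 2 hf),
      WithTop.coe_inj, hsq] at hsub
    exact ⟨f.order, hsub⟩
  · have hmin := min_order_le_order_add (x := f ^ 2) (y := -f) (by rwa [← sub_eq_add_neg])
    rw [← sub_eq_add_neg, order_neg, hsq] at hmin
    omega

theorem aeval_single_neg_one_ne_sq_sub_self [IsDomain R] {c : R} (hc : c ≠ 0) {p : R[X]}
    (hp : p ≠ 0) (hodd : ∀ n, p.coeff n ≠ 0 → Odd n) (f : LaurentSeries R) :
    aeval (single (-1 : ℤ) c) p ≠ f ^ 2 - f := by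
  set x := aeval (single (-1 : ℤ) c) p
  have hx : x ≠ 0 := by
    intro h0
    have hlead : x.coeff (-p.natDegree) = _ := coeff_aeval_single_neg_one c p p.natDegree
    rw [h0, HahnSeries.coeff_zero] at hlead
    exact mul_ne_zero (leadingCoeff_ne_zero.2 hp) (pow_ne_zero _ hc) hlead.symm
  have hord : x.coeff x.order ≠ 0 := coeff_order_eq_zero.not.2 hx
  obtain ⟨n, hn⟩ : ∃ n : ℕ, x.order = -n := Int.exists_eq_neg_ofNat
    (not_lt.1 fun hpos => hord (coeff_aeval_single_neg_one_of_pos c p hpos))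
  rw [hn, coeff_aeval_single_neg_one] at hord
  have hn_odd := hodd n (left_ne_zero_of_mul hord)
  intro hxf
  have heven := even_order_sq_sub_self (f := f) (by rw [← hxf, hn]; have := hn_odd.pos; omega)
  rw [← hxf, hn, even_neg, Int.even_coe_nat] at heven
  exact Nat.not_even_iff_odd.2 hn_odd heven

theorem map_aeval_single_neg_one {K F : Type*} [Field K]
    [FunLike F (LaurentSeries K) (LaurentSeries K)]
    [AlgHomClass F K (LaurentSeries K) (LaurentSeries K)] (σ : F) {c : K}
    (hσ : σ (single (1 : ℤ) 1) = algebraMap K _ c * single (1 : ℤ) 1) (p : K[X]) (d : K) :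
    σ (aeval (single (-1 : ℤ) d) p) = aeval (single (-1 : ℤ) (c⁻¹ * d)) p := by
  have hsingle : single (-1 : ℤ) d = algebraMap K _ d * (single (1 : ℤ) 1)⁻¹ := by
    simp [algebraMap_eq_single, single_mul_single]
  rw [← aeval_algHom_apply, hsingle, map_mul, map_inv₀, AlgHomClass.commutes, hσ]
  simp [algebraMap_eq_single, single_mul_single, mul_comm]

end LaurentSeries

open LaurentSeries

theorem conjugates_span_dimension_two_general
    (k : Type*) [Field k] [CharP k 2]
    (ζ : k) (hζ : IsPrimitiveRoot ζ 3)
    (σ : LaurentSeries k ≃ₐ[k] LaurentSeries k)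
    (hσ : σ (HahnSeries.single (1 : ℤ) (1 : k)) =
      algebraMap k (LaurentSeries k) ζ * HahnSeries.single (1 : ℤ) (1 : k))
    (p : Polynomial k) (hp : p ≠ 0)
    (hodd : ∀ n, p.coeff n ≠ 0 → Odd n)
    (h3 : ∀ n, p.coeff n ≠ 0 → ¬ (3 ∣ n))
    (a : LaurentSeries k)
    (ha : a = Polynomial.aeval
      ((HahnSeries.single (1 : ℤ) (1 : k))⁻¹ : LaurentSeries k) p)
    (ASL : AddSubgroup (LaurentSeries k))
    (hASL : ASL = AddSubgroup.closure {y : LaurentSeries k | ∃ f, y = f ^ 2 - f}) :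
    a + σ a + σ (σ a) = 0 ∧
    Nat.card (AddSubgroup.closure
      ({QuotientAddGroup.mk a, QuotientAddGroup.mk (σ a),
        QuotientAddGroup.mk (σ (σ a))} : Set (LaurentSeries k ⧸ ASL))) = 4 := by
  have hconj := map_aeval_single_neg_one σ hσ p
  have ha' : a = aeval (single (-1 : ℤ) (1 : k)) p := by rw [ha, inv_single, inv_one]
  have hσa : σ a = aeval (single (-1 : ℤ) ζ⁻¹) p := by rw [ha', hconj, mul_one]
  have hσσa : σ (σ a) = aeval (single (-1 : ℤ) (ζ⁻¹ ^ 2)) p := by rw [hσa, hconj, sq]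
  have hsum : a + σ a + σ (σ a) = 0 := by
    have h := hζ.inv.sum_aeval_pow_smul_eq_zero h3 (single (-1 : ℤ) (1 : k))
    simp only [Finset.sum_range_succ, Finset.sum_range_zero, zero_add, pow_zero, pow_one,
      Algebra.smul_def, algebraMap_eq_single, single_mul_single, mul_one] at h
    rwa [hσσa, hσa, ha']
  refine ⟨hsum, ?_⟩
  have : CharP (LaurentSeries k) 2 := charP_of_injective_algebraMap (algebraMap k _).injective 2
  let _ : Module (ZMod 2) (LaurentSeries k ⧸ ASL) := QuotientAddGroup.zmodModule fun x => by
    rw [two_nsmul, CharTwo.add_self_eq_zero]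
    exact zero_mem ASL
  have hnot : ∀ c : k, c ≠ 0 →
      (aeval (single (-1 : ℤ) c) p : LaurentSeries k ⧸ ASL) ≠ 0 := by
    intro c hc hmem
    rw [QuotientAddGroup.eq_zero_iff, hASL, mem_closure_setOf_pow_sub_self] at hmem
    obtain ⟨f, hf⟩ := hmem
    exact aeval_single_neg_one_ne_sq_sub_self hc hp hodd f hf
  have hσσa_add : σ (σ a) = a + σ a :=
    (neg_eq_of_add_eq_zero_right hsum).symm.trans (CharTwo.neg_eq _)
  have hζ' : ζ⁻¹ ≠ 0 := inv_ne_zero (hζ.ne_zero three_ne_zero)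
  rw [hσσa_add, QuotientAddGroup.mk_add]
  refine ZModModule.natCard_closure_pair_add ?_ ?_ ?_
  · rw [ha']; exact hnot 1 one_ne_zero
  · rw [hσa]; exact hnot _ hζ'
  · rw [← QuotientAddGroup.mk_add, ← hσσa_add, hσσa]; exact hnot _ (pow_ne_zero 2 hζ')

/-- Let `σ` be the `k`-automorphism of `k((t))` with `σ(t) = ζt` for a primitive cube
root of unity `ζ ∈ k`, `char k = 2`.  If `a ∈ t⁻¹k[t⁻¹]` is nonzero with only
odd-degree terms and no terms of degree divisible by 3, then `a + σ(a) + σ²(a) = 0`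
and the `𝔽₂`-span of the images of `a, σ(a), σ²(a)` in `k((t))/(F−1)k((t))` has
dimension exactly 2 (the subgroup they generate has order 4). -/
theorem conjugates_span_dimension_two
    (k : Type*) [Field k] [IsAlgClosed k] [CharP k 2]
    (ζ : k) (hζ : IsPrimitiveRoot ζ 3)
    (σ : LaurentSeries k ≃ₐ[k] LaurentSeries k)
    (hσ : σ (HahnSeries.single (1 : ℤ) (1 : k)) =
      algebraMap k (LaurentSeries k) ζ * HahnSeries.single (1 : ℤ) (1 : k))
    (p : Polynomial k) (hp : p ≠ 0)
    (hodd : ∀ n, p.coeff n ≠ 0 → Odd n)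
    (h3 : ∀ n, p.coeff n ≠ 0 → ¬ (3 ∣ n))
    (a : LaurentSeries k)
    (ha : a = Polynomial.aeval
      ((HahnSeries.single (1 : ℤ) (1 : k))⁻¹ : LaurentSeries k) p)
    (ASL : AddSubgroup (LaurentSeries k))
    (hASL : ASL = AddSubgroup.closure {y : LaurentSeries k | ∃ f, y = f ^ 2 - f}) :
    a + σ a + σ (σ a) = 0 ∧
    Nat.card (AddSubgroup.closure
      ({QuotientAddGroup.mk a, QuotientAddGroup.mk (σ a),
        QuotientAddGroup.mk (σ (σ a))} : Set (LaurentSeries k ⧸ ASL))) = 4 :=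
  conjugates_span_dimension_two_general k ζ hζ σ hσ p hp hodd h3 a ha ASL hASL
end

section
/- Let R be a complete DVR of characteristic 0 with residue characteristic 2, valuation v normalized so v(2) = 1, and containing a primitive cube root of unity ζ₃ and elements c₁, c₅. Suppose b ∈ R with v(b) = 2/5. Set a₁ = −2b − 4c₁, a₂ = b², a₃ = −4c₅/b², F(U) = 1 + a₁U + a₂U² + a₃U³, and H(U) = 1 + bU + b²U². Then F(ζ₃U)F(ζ₃²U) − H(U)² − 4c₁U − 4c₅U⁵ is a polynomial in U all of whose coefficients have valuation strictly greater than 2. -/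
open Polynomial IsLocalRing

/-!
Since `ζ` and `ζ²` are the two roots of `T² + T + 1`, the product `F(ζU)F(ζ²U)` has explicit
coefficients in `a₁, a₂, a₃`; with the chosen `a₁, a₂` it agrees with `H² + 4c₁U + 4c₅U⁵` up to
`16(bc₁ + c₁²)U² + (2a₃ + 4c₁b²)U³ + (2b + 4c₁)a₃U⁴ + a₃²U⁶`. From `b⁵ = 4u` and `b²a₃ = −4c₅`
one gets `u²a₃⁵ = −2⁶c₅⁵`, i.e. `v(a₃) ≥ 6/5`, so `a₃ = 2α` with `α ∈ 𝔪` because `R` is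
integrally closed; together with `b ∈ 𝔪` every remaining coefficient lies in `4𝔪`.
-/

theorem cubic_mul_cubic_of_sq_add_self_add_one {A : Type*} [CommRing A] {ω : A}
    (hω : ω ^ 2 + ω + 1 = 0) (a₁ a₂ a₃ x : A) :
    (1 + a₁ * (ω * x) + a₂ * (ω * x) ^ 2 + a₃ * (ω * x) ^ 3) *
        (1 + a₁ * (ω ^ 2 * x) + a₂ * (ω ^ 2 * x) ^ 2 + a₃ * (ω ^ 2 * x) ^ 3) =
      1 - a₁ * x + (a₁ ^ 2 - a₂) * x ^ 2 + (2 * a₃ - a₁ * a₂) * x ^ 3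
        + (a₂ ^ 2 - a₁ * a₃) * x ^ 4 - a₂ * a₃ * x ^ 5 + a₃ ^ 2 * x ^ 6 := by
  grind

theorem comp_mul_comp_sub_sq_eq_C_four_mul {R : Type*} [CommRing R]
    {ζ b c₁ c₅ a₁ a₂ a₃ α : R} (hζ : ζ ^ 2 + ζ + 1 = 0)
    (ha₁ : a₁ = -2 * b - 4 * c₁) (ha₂ : a₂ = b ^ 2) (ha₃ : b ^ 2 * a₃ = -(4 * c₅))
    (hα : a₃ = 2 * α) :
    ((1 + C a₁ * X + C a₂ * X ^ 2 + C a₃ * X ^ 3).comp (C ζ * X)) *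
          ((1 + C a₁ * X + C a₂ * X ^ 2 + C a₃ * X ^ 3).comp (C (ζ ^ 2) * X))
        - (1 + C b * X + C (b ^ 2) * X ^ 2) ^ 2 - C (4 * c₁) * X - C (4 * c₅) * X ^ 5 =
      C 4 * (C (4 * (b * c₁ + c₁ ^ 2)) * X ^ 2 + C (α + c₁ * b ^ 2) * X ^ 3
        + C ((b + 2 * c₁) * α) * X ^ 4 + C (α ^ 2) * X ^ 6) := by
  subst ha₁ ha₂ hα
  have hζC : C ζ ^ 2 + C ζ + 1 = (0 : R[X]) := by simpa using congrArg C hζ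
  have ha₃C : C b ^ 2 * (2 * C α) = -(4 * C c₅ : R[X]) := by
    simpa [map_ofNat C 2, map_ofNat C 4] using congrArg C ha₃
  simp only [add_comp, mul_comp, pow_comp, one_comp, C_comp, X_comp, map_pow]
  rw [cubic_mul_cubic_of_sq_add_self_add_one hζC]
  simp only [map_add, map_sub, map_mul, map_pow, map_neg, map_ofNat]
  linear_combination (-X ^ 5 : R[X]) * ha₃C

theorem mem_span_singleton_mul_maximalIdeal_of_pow_succ_dvd_pow {R : Type*} [CommRing R]
    [IsDomain R] [IsIntegrallyClosed R] [IsLocalRing R] {c x : R} (hc₀ : c ≠ 0)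
    (hc : c ∈ maximalIdeal R) {n : ℕ} (hn : n ≠ 0) (h : c ^ (n + 1) ∣ x ^ n) :
    x ∈ Ideal.span {c} * maximalIdeal R := by
  obtain ⟨y, rfl⟩ :=
    (IsIntegrallyClosed.pow_dvd_pow_iff hn).1 ((pow_dvd_pow c n.le_succ).trans h)
  obtain ⟨w, hw⟩ := h
  have hy : y ^ n = c * w :=
    mul_left_cancel₀ (pow_ne_zero n hc₀) (by linear_combination hw)
  refine Ideal.mem_span_singleton_mul.2 ⟨y, ?_, rfl⟩
  exact (maximalIdeal.isMaximal R).isPrime.mem_of_pow_mem n (hy ▸ Ideal.mul_mem_right w _ hc)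

theorem mem_span_singleton_mul_maximalIdeal_of_sq_mul_eq {R : Type*} [CommRing R]
    [IsDomain R] [IsIntegrallyClosed R] [IsLocalRing R] {c b a d : R} {u : Rˣ} (hc₀ : c ≠ 0)
    (hc : c ∈ maximalIdeal R) (hb : b ^ 5 = c ^ 2 * u) (ha : b ^ 2 * a = c ^ 2 * d) :
    a ∈ Ideal.span {c} * maximalIdeal R := by
  have hua : c ^ 4 * ((u : R) ^ 2 * a ^ 5) = c ^ 4 * (c ^ 6 * d ^ 5) :=
    calc c ^ 4 * ((u : R) ^ 2 * a ^ 5) = (c ^ 2 * u) ^ 2 * a ^ 5 := by ring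
      _ = (b ^ 2 * a) ^ 5 := by rw [← hb]; ring
      _ = c ^ 4 * (c ^ 6 * d ^ 5) := by rw [ha]; ring
  refine mem_span_singleton_mul_maximalIdeal_of_pow_succ_dvd_pow hc₀ hc (n := 5) (by norm_num) ?_
  exact ((u.isUnit.pow 2).dvd_mul_left).1 ⟨d ^ 5, mul_left_cancel₀ (pow_ne_zero 4 hc₀) hua⟩

theorem base_case_break_five_general (R : Type*) [CommRing R] [IsDomain R]
    [IsDiscreteValuationRing R] [CharZero R]
    (hres2 : (2 : R) ∈ IsLocalRing.maximalIdeal R)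
    (ζ : R) (hζ : ζ ^ 2 + ζ + 1 = 0)
    (c₁ c₅ b : R) (hb : ∃ u : Rˣ, b ^ 5 = 4 * (u : R))
    (a₁ a₂ a₃ : R) (ha₁ : a₁ = -2 * b - 4 * c₁) (ha₂ : a₂ = b ^ 2)
    (ha₃ : b ^ 2 * a₃ = -(4 * c₅))
    (F H : Polynomial R)
    (hF : F = 1 + C a₁ * X + C a₂ * X ^ 2 + C a₃ * X ^ 3)
    (hH : H = 1 + C b * X + C (b ^ 2) * X ^ 2) :
    ∀ n : ℕ,
      ((F.comp (C ζ * X)) * (F.comp (C (ζ ^ 2) * X)) - H ^ 2 - C (4 * c₁) * X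
          - C (4 * c₅) * X ^ 5).coeff n ∈
        Ideal.span {(4 : R)} * IsLocalRing.maximalIdeal R := by
  intro n
  obtain ⟨u, hu⟩ := hb
  have h4 : (4 : R) ∈ maximalIdeal R := by
    simpa [two_mul, ← two_add_two_eq_four] using Ideal.add_mem _ hres2 hres2
  have hbm : b ∈ maximalIdeal R :=
    (maximalIdeal.isMaximal R).isPrime.mem_of_pow_mem 5 (hu ▸ Ideal.mul_mem_right _ _ h4)
  obtain ⟨α, hα, hα₃⟩ := Ideal.mem_span_singleton_mul.1
    (mem_span_singleton_mul_maximalIdeal_of_sq_mul_eq (c := 2) (d := -c₅) (u := u) two_ne_zero hres2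
      (by rw [hu]; norm_num) (by rw [ha₃]; ring))
  subst hF hH
  rw [comp_mul_comp_sub_sq_eq_C_four_mul hζ ha₁ ha₂ ha₃ hα₃.symm, coeff_C_mul]
  refine Ideal.mem_span_singleton_mul.2 ⟨_, Ideal.mem_map_C_iff.1 ?_ n, rfl⟩
  have h₂ : 4 * (b * c₁ + c₁ ^ 2) ∈ maximalIdeal R := Ideal.mul_mem_right _ _ h4
  have h₃ : α + c₁ * b ^ 2 ∈ maximalIdeal R :=
    Ideal.add_mem _ hα (Ideal.mul_mem_left _ _ (Ideal.pow_mem_of_mem _ hbm 2 two_pos))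
  have h₄ : (b + 2 * c₁) * α ∈ maximalIdeal R := Ideal.mul_mem_left _ _ hα
  have h₆ : α ^ 2 ∈ maximalIdeal R := Ideal.pow_mem_of_mem _ hα 2 two_pos
  refine add_mem (add_mem (add_mem ?_ ?_) ?_) ?_ <;>
    exact Ideal.mul_mem_right _ _ (Ideal.mem_map_of_mem C ‹_›)

/-- The base case `ν = 5`: let `R` be a complete DVR of mixed characteristic `(0,2)`
(with valuation normalized so that `v(2) = 1`) containing a primitive cube root of
unity `ζ₃` and an element `b` with `v(b) = 2/5` (encoded as `b⁵ = 4·(unit)`).  With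
`a₁ = −2b − 4c₁`, `a₂ = b²`, `a₃ = −4c₅/b²`, `F(U) = 1 + a₁U + a₂U² + a₃U³` and
`H(U) = 1 + bU + b²U²`, every coefficient of
`F(ζ₃U)F(ζ₃²U) − H(U)² − 4c₁U − 4c₅U⁵` has valuation strictly greater than 2,
i.e. lies in `4𝔪`. -/
theorem base_case_break_five (R : Type*) [CommRing R] [IsDomain R]
    [IsDiscreteValuationRing R] [CharZero R]
    [IsAdicComplete (IsLocalRing.maximalIdeal R) R]
    (hres2 : (2 : R) ∈ IsLocalRing.maximalIdeal R)
    (ζ : R) (hζ : ζ ^ 2 + ζ + 1 = 0)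
    (c₁ c₅ b : R) (hb : ∃ u : Rˣ, b ^ 5 = 4 * (u : R))
    (a₁ a₂ a₃ : R) (ha₁ : a₁ = -2 * b - 4 * c₁) (ha₂ : a₂ = b ^ 2)
    (ha₃ : b ^ 2 * a₃ = -(4 * c₅))
    (F H : Polynomial R)
    (hF : F = 1 + C a₁ * X + C a₂ * X ^ 2 + C a₃ * X ^ 3)
    (hH : H = 1 + C b * X + C (b ^ 2) * X ^ 2) :
    ∀ n : ℕ,
      ((F.comp (C ζ * X)) * (F.comp (C (ζ ^ 2) * X)) - H ^ 2 - C (4 * c₁) * X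
          - C (4 * c₅) * X ^ 5).coeff n ∈
        Ideal.span {(4 : R)} * IsLocalRing.maximalIdeal R :=
  base_case_break_five_general R hres2 ζ hζ c₁ c₅ b hb a₁ a₂ a₃ ha₁ ha₂ ha₃ F H hF hH
end
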